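/- Suppose 0 < δ < res'(I)/(6n). Then the instance (T,((U_1,S_1),…,(U_k,S_k))) has a solution if and only if the instance (T',((U'_1,S'_1),…,(U'_k,S'_k))) has a solution. -/

import Mathlib

/-!
Following the path of `T` from `u` to `v` through the gadget paths of its vertices gives the
path of `T'` between any vertices `a_{u,x}` and `a_{v,y}`. Hence
`d'(a_{u,x}, a_{v,y}) = d(u, v) - δ c + e`, where `c ≤ n - 1` is the number of edges of the path
joining different cells and `0 ≤ e < δ/2` is the length of its gadget part (a path of `T'` has
fewer than `2n` edges, each gadget edge has length `δ/(4n)`). So `d'` is `δn`-close to `d`, and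
as `2δn < res'(I)`, strict comparisons of `d`-distances survive in `d'`. Ties are broken in favour
of the own cell, since `d' ≥ d` within a cell while `d' < d` across cells; hence corresponding
sites have corresponding Voronoi cells.
-/

def ConsecIn {V : Type*} (l : List V) (a b : V) : Prop :=
  ∃ m : ℕ, l[m]? = some a ∧ l[m + 1]? = some b

open Function SimpleGraph Set

section

variable {ι X Y V : Type*}

def voronoiCell (dist : X → X → ℝ) (s : ι → X) (i : ι) : Set X :=
  {x | ∀ j, dist (s i) x ≤ dist (s j) x}

def SameCell (U : ι → Set X) (x y : X) : Prop :=
  ∃ i, x ∈ U i ∧ y ∈ U i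

section SameCell

variable {U : ι → Set X} {x y z : X} {i : ι}

lemma sameCell_self (hcover : ⋃ i, U i = univ) (x : X) : SameCell U x x := by
  obtain ⟨i, hi⟩ := iUnion_eq_univ_iff.1 hcover x
  exact ⟨i, hi, hi⟩

lemma sameCell_iff_of_mem (hdisj : Pairwise (Disjoint on U)) (hx : x ∈ U i) :
    SameCell U x y ↔ y ∈ U i := by
  refine ⟨fun ⟨j, hxj, hyj⟩ => ?_, fun hy => ⟨i, hx, hy⟩⟩
  obtain rfl : j = i := by
    by_contra hji
    exact disjoint_left.1 (hdisj hji) hxj hx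
  exact hyj

lemma SameCell.trans (hdisj : Pairwise (Disjoint on U)) (hxy : SameCell U x y)
    (hyz : SameCell U y z) : SameCell U x z := by
  obtain ⟨i, hx, hy⟩ := hxy
  exact ⟨i, hx, (sameCell_iff_of_mem hdisj hy).1 hyz⟩

end SameCell

section Perturbation

variable {U : ι → Set X} {π : Y → X} {d : X → X → ℝ} {d' : Y → Y → ℝ} {ε : ℝ}

theorem voronoiCell_eq_preimage_of_abs_sub_le (hcover : ⋃ i, U i = univ)
    (hdisj : Pairwise (Disjoint on U)) (hclose : ∀ a b, |d' a b - d (π a) (π b)| ≤ ε)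
    (hres : ∀ x x' y, d x y < d x' y → d x y + 2 * ε < d x' y)
    {s : ι → X} (hs : ∀ i, voronoiCell d s i = U i) {t : ι → Y} (ht : ∀ i, π (t i) = s i)
    (i : ι) : voronoiCell d' t i = π ⁻¹' U i := by
  have hlt : ∀ a i j, π a ∈ U i → j ≠ i → d' (t i) a < d' (t j) a := by
    intro a i j ha hji
    have hai : π a ∈ voronoiCell d s i := (hs i).symm ▸ ha
    have hne : d (s i) (π a) ≠ d (s j) (π a) := fun heq => by
      have haj : π a ∈ U j := hs j ▸ fun l => heq ▸ hai l
      exact disjoint_left.1 (hdisj hji) haj ha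
    have hgap := hres _ _ _ ((hai j).lt_of_ne hne)
    have hi := abs_le.1 (hclose (t i) a)
    have hj := abs_le.1 (hclose (t j) a)
    rw [ht] at hi hj
    linarith
  ext a
  refine ⟨fun ha => ?_, fun ha j => ?_⟩
  · obtain ⟨j, hj⟩ := iUnion_eq_univ_iff.1 hcover (π a)
    obtain rfl | hij := eq_or_ne i j
    · exact hj
    · exact absurd (ha j) (hlt a j i hj hij).not_ge
  · obtain rfl | hji := eq_or_ne j i
    · exact le_rfl
    · exact (hlt a i j ha hji).le

theorem voronoiCell_comp_eq_of_abs_sub_le (hcover : ⋃ i, U i = univ)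
    (hdisj : Pairwise (Disjoint on U)) (hπ : Surjective π)
    (hclose : ∀ a b, |d' a b - d (π a) (π b)| ≤ ε)
    (hres : ∀ x x' y, d x y < d x' y → d x y + 2 * ε < d x' y)
    (hsame : ∀ a b, SameCell U (π a) (π b) → d (π a) (π b) ≤ d' a b)
    (hcross : ∀ a b, ¬ SameCell U (π a) (π b) → d' a b < d (π a) (π b))
    {t : ι → Y} (ht : ∀ i, voronoiCell d' t i = π ⁻¹' U i) (htU : ∀ i, π (t i) ∈ U i) (i : ι) :
    voronoiCell d (π ∘ t) i = U i := by
  ext x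
  obtain ⟨a, rfl⟩ := hπ x
  have hcell : ∀ j, π a ∈ U j → ∀ l, d' (t j) a ≤ d' (t l) a := fun j hj => by
    rw [← mem_preimage, ← ht j] at hj
    exact hj
  refine ⟨fun ha => ?_, fun ha j => ?_⟩
  · by_contra hai
    obtain ⟨j, hj⟩ := iUnion_eq_univ_iff.1 hcover (π a)
    refine lt_irrefl (d (π (t j)) (π a)) ?_
    calc d (π (t j)) (π a) ≤ d' (t j) a := hsame (t j) a ⟨j, htU j, hj⟩
      _ ≤ d' (t i) a := hcell j hj i
      _ < d (π (t i)) (π a) := hcross (t i) a fun h => hai ((sameCell_iff_of_mem hdisj (htU i)).1 h)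
      _ ≤ d (π (t j)) (π a) := ha j
  · by_contra! hji
    have hgap := hres (π (t j)) (π (t i)) (π a) hji
    have h1 := hcell i ha j
    have hi := abs_le.1 (hclose (t i) a)
    have hj := abs_le.1 (hclose (t j) a)
    linarith

end Perturbation

namespace SimpleGraph

section Chain

variable {α : Type*} {G : SimpleGraph α}

lemma exists_walk_support_subset_of_isChain_cons :
    ∀ {a : α} {l : List α}, (a :: l).IsChain G.Adj →
      ∀ x ∈ a :: l, ∃ p : G.Walk a x, p.support ⊆ a :: l
  | a, [], _, x, hx => by
    obtain rfl : x = a := List.mem_singleton.1 hx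
    exact ⟨Walk.nil, by simp⟩
  | a, b :: l, hl, x, hx => by
    rw [List.isChain_cons_cons] at hl
    obtain rfl | hx := List.mem_cons.1 hx
    · exact ⟨Walk.nil, by simp⟩
    · obtain ⟨p, hp⟩ := exists_walk_support_subset_of_isChain_cons hl.2 x hx
      exact ⟨Walk.cons hl.1 p, by simpa using List.subset_cons_of_subset a hp⟩

lemma exists_walk_support_subset_of_isChain {l : List α} (hl : l.IsChain G.Adj) {x y : α}
    (hx : x ∈ l) (hy : y ∈ l) : ∃ p : G.Walk x y, p.support ⊆ l := by
  cases l with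
  | nil => simp at hx
  | cons a l =>
    obtain ⟨p, hp⟩ := exists_walk_support_subset_of_isChain_cons hl x hx
    obtain ⟨q, hq⟩ := exists_walk_support_subset_of_isChain_cons hl y hy
    refine ⟨p.reverse.append q, fun z hz => ?_⟩
    rw [Walk.support_append, Walk.support_reverse, List.mem_append, List.mem_reverse] at hz
    exact hz.elim (fun h => hp h) fun h => hq (List.mem_of_mem_tail h)

lemma Walk.sum_map_edges_eq_mul_length {f : Sym2 α → ℝ} {c : ℝ} {u v : α} (p : G.Walk u v)
    (h : ∀ e ∈ p.darts, f e.edge = c) : (p.edges.map f).sum = c * p.length := by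
  rw [List.sum_eq_card_nsmul _ c (by simpa [Walk.edges] using h), List.length_map,
    Walk.length_edges, nsmul_eq_mul, mul_comm]

end Chain

variable {T : SimpleGraph V}

/-- `⟨(u, v), h⟩ : Port T` is the vertex `a_{u,v}` of the transformed tree. -/
abbrev Port (T : SimpleGraph V) : Type _ := {p : V × V // T.Adj p.1 p.2}

lemma IsTree.card_port [Fintype V] (hT : T.IsTree) [Fintype (Port T)] :
    Fintype.card (Port T) = 2 * (Fintype.card V - 1) := by
  classical
  rw [← hT.card_edgeFinset, Nat.add_sub_cancel, ← dart_card_eq_twice_card_edges]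
  exact Fintype.card_congr ⟨fun p => ⟨p.1, p.2⟩, fun e => ⟨e.toProd, e.adj⟩,
    fun _ => rfl, fun _ => rfl⟩

def IsPathDist (T : SimpleGraph V) (w : Sym2 V → ℝ) (d : V → V → ℝ) : Prop :=
  ∀ (u v : V) (p : T.Walk u v), p.IsPath → (p.edges.map w).sum = d u v

section CrossCount

variable {U : ι → Set V}

open Classical in
noncomputable def crossCount (U : ι → Set V) {u v : V} (p : T.Walk u v) : ℕ :=
  p.darts.countP fun e => ¬ SameCell U e.fst e.snd

@[simp]
lemma crossCount_nil {u : V} : crossCount U (Walk.nil : T.Walk u u) = 0 := rfl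

open Classical in
lemma crossCount_cons {u v x : V} (h : T.Adj u v) (p : T.Walk v x) :
    crossCount U (Walk.cons h p) = crossCount U p + if SameCell U u v then 0 else 1 := by
  by_cases hs : SameCell U u v <;> simp [crossCount, hs]

lemma crossCount_le_length {u v : V} (p : T.Walk u v) : crossCount U p ≤ p.length :=
  p.length_darts ▸ List.countP_le_length

lemma crossCount_eq_zero_of_support_subset {u v : V} {i : ι} (p : T.Walk u v)
    (hp : ∀ z ∈ p.support, z ∈ U i) : crossCount U p = 0 :=
  List.countP_eq_zero.2 fun e he => by
    simpa using ⟨i, hp _ (p.dart_fst_mem_support_of_mem_darts he),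
      hp _ (p.dart_snd_mem_support_of_mem_darts he)⟩

lemma sameCell_of_crossCount_eq_zero (hcover : ⋃ i, U i = univ)
    (hdisj : Pairwise (Disjoint on U)) {u v : V} :
    ∀ p : T.Walk u v, crossCount U p = 0 → SameCell U u v
  | .nil, _ => sameCell_self hcover u
  | .cons h p, hp => by
    rw [crossCount_cons] at hp
    split_ifs at hp with hs
    · exact hs.trans hdisj (sameCell_of_crossCount_eq_zero hcover hdisj p hp)

end CrossCount

variable {T' : SimpleGraph (Port T)}

lemma exists_walk_of_consecIn (L : V → List V) (hLmem : ∀ u v, v ∈ L u ↔ T.Adj u v)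
    (hconsec : ∀ u x y (hx : T.Adj u x) (hy : T.Adj u y), ConsecIn (L u) x y →
      T'.Adj ⟨(u, x), hx⟩ ⟨(u, y), hy⟩)
    (u x y : V) (hx : T.Adj u x) (hy : T.Adj u y) :
    ∃ q : T'.Walk ⟨(u, x), hx⟩ ⟨(u, y), hy⟩, ∀ a ∈ q.support, a.1.1 = u := by
  let ports : List (Port T) :=
    (L u).pmap (fun y hy => ⟨(u, y), (hLmem u y).1 hy⟩) fun _ h => h
  have hchain : ports.IsChain T'.Adj :=
    List.isChain_pmap_of_isChain (R := ConsecIn (L u)) (fun _ _ _ _ h => hconsec u _ _ _ _ h)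
      (List.isChain_iff_getElem.2 fun i hi => ⟨i, by simp, by simp⟩) _
  have hmem : ∀ z (hz : T.Adj u z), (⟨(u, z), hz⟩ : Port T) ∈ ports :=
    fun z hz => List.mem_pmap.2 ⟨z, (hLmem u z).2 hz, rfl⟩
  obtain ⟨q, hq⟩ := exists_walk_support_subset_of_isChain hchain (hmem x hx) (hmem y hy)
  refine ⟨q, fun a ha => ?_⟩
  obtain ⟨z, _, rfl⟩ := List.mem_pmap.1 (hq ha)
  rfl

open Classical in
structure IsDegreeThreeTransform (T : SimpleGraph V) (w : Sym2 V → ℝ) (U : ι → Set V)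
    (δ δ' : ℝ) (T' : SimpleGraph (Port T)) (w' : Sym2 (Port T) → ℝ) : Prop where
  adj_link : ∀ u v (h : T.Adj u v), T'.Adj ⟨(u, v), h⟩ ⟨(v, u), h.symm⟩
  exists_walk_gadget : ∀ u x y (hx : T.Adj u x) (hy : T.Adj u y),
    ∃ q : T'.Walk ⟨(u, x), hx⟩ ⟨(u, y), hy⟩, ∀ a ∈ q.support, a.1.1 = u
  weight_link : ∀ u v (h : T.Adj u v),
    w' s(⟨(u, v), h⟩, ⟨(v, u), h.symm⟩) = w s(u, v) - if SameCell U u v then 0 else δ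
  weight_gadget : ∀ a b : Port T, a.1.1 = b.1.1 → a ≠ b → w' s(a, b) = δ'

namespace IsDegreeThreeTransform

variable {w : Sym2 V → ℝ} {U : ι → Set V} {δ δ' : ℝ} {w' : Sym2 (Port T) → ℝ}

lemma exists_isPath_gadget (hX : IsDegreeThreeTransform T w U δ δ' T' w')
    (u x y : V) (hx : T.Adj u x) (hy : T.Adj u y) :
    ∃ q : T'.Walk ⟨(u, x), hx⟩ ⟨(u, y), hy⟩, q.IsPath ∧ (∀ a ∈ q.support, a.1.1 = u) ∧
      (q.edges.map w').sum = δ' * q.length := by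
  classical
  obtain ⟨q, hq⟩ := hX.exists_walk_gadget u x y hx hy
  have hsupp : ∀ a ∈ q.bypass.support, a.1.1 = u :=
    fun a ha => hq a (q.support_bypass_subset_support ha)
  refine ⟨q.bypass, q.bypass_isPath, hsupp, q.bypass.sum_map_edges_eq_mul_length fun e he => ?_⟩
  refine hX.weight_gadget _ _ ?_ e.adj.ne
  rw [hsupp _ (q.bypass.dart_fst_mem_support_of_mem_darts he),
    hsupp _ (q.bypass.dart_snd_mem_support_of_mem_darts he)]

lemma exists_isPath_lift (hX : IsDegreeThreeTransform T w U δ δ' T' w') {u v : V}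
    (p : T.Walk u v) (hp : p.IsPath) (x y : V) (hx : T.Adj u x) (hy : T.Adj v y) :
    ∃ q : T'.Walk ⟨(u, x), hx⟩ ⟨(v, y), hy⟩, q.IsPath ∧ (∀ a ∈ q.support, a.1.1 ∈ p.support) ∧
      ∃ G ≤ q.length,
        (q.edges.map w').sum = (p.edges.map w).sum - δ * crossCount U p + δ' * G := by
  induction p generalizing x with
  | nil =>
    obtain ⟨q, hq, hsupp, hsum⟩ := hX.exists_isPath_gadget _ x y hx hy
    exact ⟨q, hq, fun a ha => by simp [hsupp a ha], q.length, le_rfl, by simp [hsum]⟩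
  | @cons u u' v h p ih =>
    rw [Walk.cons_isPath_iff] at hp
    obtain ⟨q', hq', hsupp', G', hG', hsum'⟩ := ih hp.1 u h.symm hy
    obtain ⟨g, hg, hsuppg, hsumg⟩ := hX.exists_isPath_gadget u x u' hx h
    refine ⟨g.append (.cons (hX.adj_link u u' h) q'), ?_, ?_, g.length + G', ?_, ?_⟩
    · rw [Walk.isPath_def, Walk.support_append, Walk.support_cons, List.tail_cons]
      refine hg.support_nodup.append hq'.support_nodup fun a ha ha' => hp.2 ?_
      exact hsuppg a ha ▸ hsupp' a ha'
    · intro a ha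
      rw [Walk.support_append, Walk.support_cons, List.tail_cons, List.mem_append] at ha
      rw [Walk.support_cons, List.mem_cons]
      exact ha.imp (hsuppg a) (hsupp' a)
    · simp only [Walk.length_append, Walk.length_cons]
      omega
    · rw [Walk.edges_append, Walk.edges_cons, List.map_append, List.sum_append, List.map_cons,
        List.sum_cons, hsumg, hX.weight_link, hsum', Walk.edges_cons, List.map_cons,
        List.sum_cons, crossCount_cons]
      split_ifs <;> push_cast <;> ring

variable {d : V → V → ℝ} {d' : Port T → Port T → ℝ} [Fintype V]

theorem exists_dist_eq (hX : IsDegreeThreeTransform T w U δ δ' T' w') (hT : T.IsTree)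
    (hd : IsPathDist T w d) (hd' : IsPathDist T' w' d') (hδ : 0 < δ)
    (hδ' : δ' = δ / (4 * Fintype.card V)) (A B : Port T) {p : T.Walk A.1.1 B.1.1}
    (hp : p.IsPath) :
    ∃ e, 0 ≤ e ∧ e < δ / 2 ∧ d' A B = d A.1.1 B.1.1 - δ * crossCount U p + e := by
  classical
  have hn : (0 : ℝ) < Fintype.card V := by
    have : Nonempty V := ⟨A.1.1⟩
    exact_mod_cast Fintype.card_pos
  obtain ⟨⟨a, x⟩, hx⟩ := A
  obtain ⟨⟨b, y⟩, hy⟩ := B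
  obtain ⟨q, hq, -, G, hGq, hsum⟩ := hX.exists_isPath_lift p hp x y hx hy
  have hG : (G : ℝ) < 2 * Fintype.card V := by
    have := hq.length_lt
    rw [hT.card_port] at this
    exact_mod_cast (by omega : G < 2 * Fintype.card V)
  refine ⟨δ' * G, by rw [hδ']; positivity, ?_, by rw [← hd' _ _ q hq, hsum, hd _ _ p hp]⟩
  rw [hδ', div_mul_eq_mul_div, div_lt_iff₀ (by positivity)]
  nlinarith

theorem abs_dist_sub_le (hX : IsDegreeThreeTransform T w U δ δ' T' w') (hT : T.IsTree)
    (hd : IsPathDist T w d) (hd' : IsPathDist T' w' d') (hδ : 0 < δ)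
    (hδ' : δ' = δ / (4 * Fintype.card V)) (A B : Port T) :
    |d' A B - d A.1.1 B.1.1| ≤ δ * Fintype.card V := by
  obtain ⟨p, hp⟩ := (hT.connected.preconnected A.1.1 B.1.1).exists_isPath
  obtain ⟨e, he, he', hde⟩ := hX.exists_dist_eq hT hd hd' hδ hδ' A B hp
  have hc : (crossCount U p : ℝ) ≤ Fintype.card V := by
    exact_mod_cast (crossCount_le_length p).trans hp.length_lt.le
  have hn : (1 : ℝ) ≤ Fintype.card V := by
    have : Nonempty V := ⟨A.1.1⟩
    exact_mod_cast Fintype.card_pos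
  have : δ * crossCount U p ≤ δ * Fintype.card V := by gcongr
  rw [abs_le]
  constructor <;> nlinarith

theorem dist_le_of_sameCell (hX : IsDegreeThreeTransform T w U δ δ' T' w') (hT : T.IsTree)
    (hd : IsPathDist T w d) (hd' : IsPathDist T' w' d') (hδ : 0 < δ)
    (hδ' : δ' = δ / (4 * Fintype.card V)) (hUconn : ∀ i, (T.induce (U i)).Connected)
    (A B : Port T) (h : SameCell U A.1.1 B.1.1) : d A.1.1 B.1.1 ≤ d' A B := by
  obtain ⟨i, hA, hB⟩ := h
  obtain ⟨p, hp⟩ := ((hUconn i).preconnected ⟨_, hA⟩ ⟨_, hB⟩).exists_isPath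
  let emb : T.induce (U i) ↪g T := Embedding.induce (U i)
  let p' : T.Walk A.1.1 B.1.1 := p.map emb.toHom
  obtain ⟨e, he, -, hde⟩ :=
    hX.exists_dist_eq hT hd hd' hδ hδ' A B (p := p') (hp.map emb.injective)
  have hcell : ∀ z ∈ p'.support, z ∈ U i := by
    intro z hz
    obtain ⟨z, -, rfl⟩ := List.mem_map.1 ((Walk.support_map emb.toHom p) ▸ hz)
    exact z.2
  rw [crossCount_eq_zero_of_support_subset _ hcell] at hde
  simp only [CharP.cast_eq_zero, mul_zero, sub_zero] at hde
  linarith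

theorem dist_lt_of_not_sameCell (hX : IsDegreeThreeTransform T w U δ δ' T' w') (hT : T.IsTree)
    (hd : IsPathDist T w d) (hd' : IsPathDist T' w' d') (hδ : 0 < δ)
    (hδ' : δ' = δ / (4 * Fintype.card V)) (hcover : ⋃ i, U i = univ)
    (hdisj : Pairwise (Disjoint on U)) (A B : Port T) (h : ¬ SameCell U A.1.1 B.1.1) :
    d' A B < d A.1.1 B.1.1 := by
  obtain ⟨p, hp⟩ := (hT.connected.preconnected A.1.1 B.1.1).exists_isPath
  obtain ⟨e, -, he, hde⟩ := hX.exists_dist_eq hT hd hd' hδ hδ' A B hp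
  have hc : (1 : ℝ) ≤ crossCount U p := by
    exact_mod_cast Nat.one_le_iff_ne_zero.2 fun h0 =>
      h (sameCell_of_crossCount_eq_zero hcover hdisj p h0)
  nlinarith

end IsDegreeThreeTransform

end SimpleGraph

end

theorem degree_three_transform_solution_iff_general
    {V : Type*} [Fintype V] (T : SimpleGraph V) (hT : T.IsTree)
    (hn : 2 ≤ Fintype.card V)
    (w : Sym2 V → ℝ)
    (d : V → V → ℝ)
    (hd : ∀ (u v : V) (p : T.Walk u v), p.IsPath → (p.edges.map w).sum = d u v)
    (k : ℕ) (U S : Fin k → Set V)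
    (hcover : (⋃ i, U i) = Set.univ)
    (hdisj : ∀ i j, i ≠ j → Disjoint (U i) (U j))
    (hUconn : ∀ i, (T.induce (U i)).Connected)
    (hSU : ∀ i, S i ⊆ U i)
    -- the resolution `res'(I)`: the minimum positive difference of distances
    (resI : ℝ)
    (hres1 : ∀ v v' u : V, 0 < d v u - d v' u → resI ≤ d v u - d v' u)
    (δ δ' : ℝ) (hδ : 0 < δ) (hδres : δ < resI / (6 * Fintype.card V))
    (hδ' : δ' = δ / (4 * Fintype.card V))
    -- an enumeration of the neighbours of each vertex
    (L : V → List V) (hLmem : ∀ u v, v ∈ L u ↔ T.Adj u v)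
    -- the transformed tree `T'`
    (T' : SimpleGraph {p : V × V // T.Adj p.1 p.2})
    (hT'adj : ∀ a b : {p : V × V // T.Adj p.1 p.2}, T'.Adj a b ↔
      ((a.1.1 = b.1.2 ∧ a.1.2 = b.1.1) ∨
       (a.1.1 = b.1.1 ∧ (ConsecIn (L a.1.1) a.1.2 b.1.2 ∨ ConsecIn (L a.1.1) b.1.2 a.1.2))))
    -- its edge-lengths
    (w' : Sym2 {p : V × V // T.Adj p.1 p.2} → ℝ)
    (hwsame : ∀ a b : {p : V × V // T.Adj p.1 p.2}, a.1.1 = b.1.2 → a.1.2 = b.1.1 →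
      (∃ i, a.1.1 ∈ U i ∧ a.1.2 ∈ U i) → w' s(a, b) = w s(a.1.1, a.1.2))
    (hwdiff : ∀ a b : {p : V × V // T.Adj p.1 p.2}, a.1.1 = b.1.2 → a.1.2 = b.1.1 →
      (¬ ∃ i, a.1.1 ∈ U i ∧ a.1.2 ∈ U i) → w' s(a, b) = w s(a.1.1, a.1.2) - δ)
    (hwpath : ∀ a b : {p : V × V // T.Adj p.1 p.2}, a.1.1 = b.1.1 → a ≠ b →
      w' s(a, b) = δ')
    -- its tree distance
    (d' : {p : V × V // T.Adj p.1 p.2} → {p : V × V // T.Adj p.1 p.2} → ℝ)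
    (hd' : ∀ (a b : {p : V × V // T.Adj p.1 p.2}) (p : T'.Walk a b), p.IsPath →
      (p.edges.map w').sum = d' a b) :
    (∃ st : Fin k → V, ∀ i, st i ∈ S i ∧ {v | ∀ j, d (st i) v ≤ d (st j) v} = U i) ↔
      (∃ st' : Fin k → {p : V × V // T.Adj p.1 p.2}, ∀ i,
        (st' i).1.1 ∈ S i ∧
        {a : {p : V × V // T.Adj p.1 p.2} | ∀ j, d' (st' i) a ≤ d' (st' j) a} =
          {a : {p : V × V // T.Adj p.1 p.2} | a.1.1 ∈ U i}) := by
  have hX : T.IsDegreeThreeTransform w U δ δ' T' w' :=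
    { adj_link := fun _ _ _ => (hT'adj _ _).2 (.inl ⟨rfl, rfl⟩)
      exists_walk_gadget := exists_walk_of_consecIn L hLmem
        fun _ _ _ _ _ h => (hT'adj _ _).2 (.inr ⟨rfl, .inl h⟩)
      weight_link := fun u v h => by
        split_ifs with hs
        · rw [hwsame ⟨(u, v), h⟩ ⟨(v, u), h.symm⟩ rfl rfl hs, sub_zero]
        · exact hwdiff ⟨(u, v), h⟩ ⟨(v, u), h.symm⟩ rfl rfl hs
      weight_gadget := hwpath }
  have hclose := hX.abs_dist_sub_le hT hd hd' hδ hδ'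
  have hres : ∀ x x' y, d x y < d x' y → d x y + 2 * (δ * Fintype.card V) < d x' y := by
    intro x x' y h
    have hgap := hres1 x' x y (by linarith)
    rw [lt_div_iff₀ (by positivity)] at hδres
    linarith
  have : Nontrivial V := Fintype.one_lt_card_iff_nontrivial.1 hn
  have hnbr : ∀ v, ∃ y, T.Adj v y := hT.connected.preconnected.exists_adj_of_nontrivial
  constructor
  · rintro ⟨s, hs⟩
    choose y hy using fun i => hnbr (s i)
    refine ⟨fun i => ⟨(s i, y i), hy i⟩, fun i => ⟨(hs i).1, ?_⟩⟩
    exact voronoiCell_eq_preimage_of_abs_sub_le hcover hdisj hclose hres (fun i => (hs i).2)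
      (t := fun i => ⟨(s i, y i), hy i⟩) (fun _ => rfl) i
  · rintro ⟨t, ht⟩
    refine ⟨fun i => (t i).1.1, fun i => ⟨(ht i).1, ?_⟩⟩
    have hπ : Surjective fun a : Port T => a.1.1 := fun v =>
      let ⟨y, hy⟩ := hnbr v
      ⟨⟨(v, y), hy⟩, rfl⟩
    exact voronoiCell_comp_eq_of_abs_sub_le hcover hdisj hπ hclose hres
      (hX.dist_le_of_sameCell hT hd hd' hδ hδ' hUconn)
      (hX.dist_lt_of_not_sameCell hT hd hd' hδ hδ' hcover hdisj)
      (fun i => (ht i).2) (fun i => hSU i (ht i).1) i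

/-- Transformation of a tree instance with pairwise disjoint cells into one of maximum
degree 3.  The new tree `T'` has a vertex `a_{u,v}` for every ordered pair of adjacent
vertices of `T` (the subtype `{p : V × V // T.Adj p.1 p.2}`): `a_{u,v}` and `a_{v,u}` are
joined by an edge of length `λ(uv)` if `u,v` lie in a common cell `U i` and `λ(uv) − δ`
otherwise, and for each `u` the vertices `a_{u,v}` are connected into a path (given by an
enumeration `L u` of the neighbours of `u`) whose edges all have length `δ' = δ/(4n)`.
The cells become `U'ᵢ = {a_{u,v} : u ∈ Uᵢ}` and the site sets `S'ᵢ = {a_{u,v} : u ∈ Sᵢ}`.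
If `0 < δ < res'(I)/(6n)`, the original instance has a solution iff the transformed
instance has a solution. -/
theorem degree_three_transform_solution_iff
    {V : Type*} [Fintype V] [DecidableEq V] (T : SimpleGraph V) (hT : T.IsTree)
    (hn : 2 ≤ Fintype.card V)
    (w : Sym2 V → ℝ) (hw : ∀ e ∈ T.edgeSet, 0 < w e)
    (d : V → V → ℝ)
    (hd : ∀ (u v : V) (p : T.Walk u v), p.IsPath → (p.edges.map w).sum = d u v)
    (k : ℕ) (U S : Fin k → Set V)
    (hcover : (⋃ i, U i) = Set.univ)
    (hdisj : ∀ i j, i ≠ j → Disjoint (U i) (U j))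
    (hUconn : ∀ i, (T.induce (U i)).Connected)
    (hSU : ∀ i, S i ⊆ U i)
    -- the resolution `res'(I)`: the minimum positive difference of distances
    (resI : ℝ)
    (hres1 : ∀ v v' u : V, 0 < d v u - d v' u → resI ≤ d v u - d v' u)
    (hres2 : ∃ v v' u : V, 0 < d v u - d v' u ∧ resI = d v u - d v' u)
    (δ δ' : ℝ) (hδ : 0 < δ) (hδres : δ < resI / (6 * Fintype.card V))
    (hδ' : δ' = δ / (4 * Fintype.card V))
    -- an enumeration of the neighbours of each vertex
    (L : V → List V) (hLnd : ∀ u, (L u).Nodup) (hLmem : ∀ u v, v ∈ L u ↔ T.Adj u v)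
    -- the transformed tree `T'`
    (T' : SimpleGraph {p : V × V // T.Adj p.1 p.2})
    (hT'adj : ∀ a b : {p : V × V // T.Adj p.1 p.2}, T'.Adj a b ↔
      ((a.1.1 = b.1.2 ∧ a.1.2 = b.1.1) ∨
       (a.1.1 = b.1.1 ∧ (ConsecIn (L a.1.1) a.1.2 b.1.2 ∨ ConsecIn (L a.1.1) b.1.2 a.1.2))))
    -- its edge-lengths
    (w' : Sym2 {p : V × V // T.Adj p.1 p.2} → ℝ)
    (hwsame : ∀ a b : {p : V × V // T.Adj p.1 p.2}, a.1.1 = b.1.2 → a.1.2 = b.1.1 →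
      (∃ i, a.1.1 ∈ U i ∧ a.1.2 ∈ U i) → w' s(a, b) = w s(a.1.1, a.1.2))
    (hwdiff : ∀ a b : {p : V × V // T.Adj p.1 p.2}, a.1.1 = b.1.2 → a.1.2 = b.1.1 →
      (¬ ∃ i, a.1.1 ∈ U i ∧ a.1.2 ∈ U i) → w' s(a, b) = w s(a.1.1, a.1.2) - δ)
    (hwpath : ∀ a b : {p : V × V // T.Adj p.1 p.2}, a.1.1 = b.1.1 → a ≠ b →
      w' s(a, b) = δ')
    -- its tree distance
    (d' : {p : V × V // T.Adj p.1 p.2} → {p : V × V // T.Adj p.1 p.2} → ℝ)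
    (hd' : ∀ (a b : {p : V × V // T.Adj p.1 p.2}) (p : T'.Walk a b), p.IsPath →
      (p.edges.map w').sum = d' a b) :
    (∃ st : Fin k → V, ∀ i, st i ∈ S i ∧ {v | ∀ j, d (st i) v ≤ d (st j) v} = U i) ↔
      (∃ st' : Fin k → {p : V × V // T.Adj p.1 p.2}, ∀ i,
        (st' i).1.1 ∈ S i ∧
        {a : {p : V × V // T.Adj p.1 p.2} | ∀ j, d' (st' i) a ≤ d' (st' j) a} =
          {a : {p : V × V // T.Adj p.1 p.2} | a.1.1 ∈ U i}) :=
  degree_three_transform_solution_iff_general T hT hn w d hd k U S hcover hdisj hUconn hSU resI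
    hres1 δ δ' hδ hδres hδ' L hLmem T' hT'adj w' hwsame hwdiff hwpath d' hd'
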